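/- Let F be a homogeneous cubic polynomial on V = ℂ⁶ defining a smooth cubic fourfold (the partial derivatives of F have no common zero in V ∖ {0}), let W ⊆ V be a 3-dimensional subspace with F|_W = 0, and let Λ ⊆ W be a 2-dimensional subspace. Suppose that the subspace U := ⋂_{x ∈ Λ ∖ {0}} ker(dF_x) is 4-dimensional. Then W ⊆ U, and there exist a nonzero linear form l on U with ker l = W and a quadratic form q on U such that F|_U = l · q and q|_Λ = 0. -/

import Mathlib

open MvPolynomial

/-- The differential `dF_x : V → ℂ` of a polynomial `F` at a point `x`,
given by `y ↦ ∑ i, y i * ∂F/∂xᵢ(x)`. -/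
noncomputable def diffAt (F : MvPolynomial (Fin 6) ℂ) (x : Fin 6 → ℂ) :
    (Fin 6 → ℂ) →ₗ[ℂ] ℂ :=
  ∑ i, (eval x (pderiv i F)) • LinearMap.proj i

lemma pderiv_pderiv_comm (i j : Fin 6) (p : MvPolynomial (Fin 6) ℂ) :
    pderiv i (pderiv j p) = pderiv j (pderiv i p) := by
  induction p using MvPolynomial.induction_on with
  | C a => simp
  | add p q hp hq => simp [hp, hq]
  | mul_X r m ih =>
    simp only [pderiv_mul, map_add, ih]
    rcases eq_or_ne i m with rfl | hi
    · rcases eq_or_ne j i with rfl | hj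
      · ring
      · simp [pderiv_X_of_ne hj, pderiv_X_of_ne hj.symm]
    · rcases eq_or_ne j m with rfl | hj
      · simp [pderiv_X_of_ne hi, pderiv_X_of_ne hi.symm]
      · simp [pderiv_X_of_ne hi.symm, pderiv_X_of_ne hj.symm]

lemma degree_eq_sum_univ (d : Fin 6 →₀ ℕ) : d.degree = ∑ i, d i :=
  Finset.sum_subset (Finset.subset_univ _) (fun i _ hi => Finsupp.notMem_support_iff.mp hi)

lemma euler6 {p : MvPolynomial (Fin 6) ℂ} {n : ℕ} (hp : p.IsHomogeneous n) :
    ∑ i, X i * pderiv i p = n • p := by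
  have key : ∀ (d : Fin 6 →₀ ℕ) (r : ℂ),
      ∑ i, X i * pderiv i (monomial d r) = d.degree • monomial d r := by
    intro d r
    have h1 : ∀ i : Fin 6, X i * pderiv i (monomial d r) = d i • monomial d r := by
      intro i
      rw [pderiv_monomial]
      rcases Nat.eq_zero_or_pos (d i) with h | h
      · simp [h]
      · have hle : Finsupp.single i 1 ≤ d := Finsupp.single_le_iff.mpr h
        rw [X, monomial_mul, add_tsub_cancel_of_le hle, one_mul, smul_monomial]
        congr 1
        push_cast
        ring
    rw [Finset.sum_congr rfl (fun i _ => h1 i), ← Finset.sum_smul, ← degree_eq_sum_univ]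
  conv_lhs => rw [p.as_sum]
  conv_rhs => rw [p.as_sum]
  simp only [map_sum, Finset.mul_sum, Finset.smul_sum]
  rw [Finset.sum_comm]
  refine Finset.sum_congr rfl fun d hd => ?_
  rw [key d _]
  congr 1
  have := hp (mem_support_iff.mp hd)
  rwa [Pi.one_def, ← Finsupp.degree_eq_weight_one] at this

lemma homog_pderiv {p : MvPolynomial (Fin 6) ℂ} {n : ℕ} (hp : p.IsHomogeneous (n + 1))
    (i : Fin 6) : (pderiv i p).IsHomogeneous n := by
  rw [p.as_sum, map_sum]
  apply MvPolynomial.IsHomogeneous.sum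
  intro d hd
  have hdeg : d.degree = n + 1 := by
    have := hp (mem_support_iff.mp hd)
    rwa [Pi.one_def, ← Finsupp.degree_eq_weight_one] at this
  rw [pderiv_monomial]
  rcases Nat.eq_zero_or_pos (d i) with h | h
  · simp only [h, Nat.cast_zero, mul_zero]
    rw [show ((monomial (d - Finsupp.single i 1)) (0 : ℂ)) = 0 from monomial_zero]
    exact isHomogeneous_zero _ _ _
  · apply isHomogeneous_monomial
    have hle : Finsupp.single i 1 ≤ d := Finsupp.single_le_iff.mpr h
    have hadd : (d - Finsupp.single i 1) + Finsupp.single i 1 = d := tsub_add_cancel_of_le hle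
    have : (d - Finsupp.single i 1).degree + (Finsupp.single i 1).degree = d.degree := by
      rw [← hadd]
      simp [degree_eq_sum_univ, Finset.sum_add_distrib]
    have hs : (Finsupp.single i 1).degree = 1 := by
      simp [degree_eq_sum_univ, Finsupp.single_apply]
    omega

lemma eval_homog_zero {p : MvPolynomial (Fin 6) ℂ} (hp : p.IsHomogeneous 0)
    (v : Fin 6 → ℂ) : eval v p = eval 0 p := by
  have hz : ∀ d ∈ p.support, d = 0 := by
    intro d hd
    have := hp (mem_support_iff.mp hd)
    rw [Pi.one_def, ← Finsupp.degree_eq_weight_one] at this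
    exact (Finsupp.degree_eq_zero_iff d).mp this
  rw [eval_eq, eval_eq]
  refine Finset.sum_congr rfl fun d hd => ?_
  rw [hz d hd]
  simp

lemma eval_homog_one {p : MvPolynomial (Fin 6) ℂ} (hp : p.IsHomogeneous 1)
    (v : Fin 6 → ℂ) : eval v p = ∑ j, v j * eval 0 (pderiv j p) := by
  have he := congrArg (eval v) (euler6 hp)
  simp only [map_sum, map_mul, eval_X, one_smul] at he
  rw [← he]
  refine Finset.sum_congr rfl fun j _ => ?_
  rw [eval_homog_zero (homog_pderiv hp j) v]

lemma eval_homog_two {p : MvPolynomial (Fin 6) ℂ} (hp : p.IsHomogeneous 2)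
    (v : Fin 6 → ℂ) :
    eval v p * 2 = ∑ k, v k * ∑ j, v j * eval 0 (pderiv j (pderiv k p)) := by
  have he := congrArg (eval v) (euler6 hp)
  simp only [map_sum, map_mul, eval_X, smul_eval, nsmul_eq_mul, Nat.cast_ofNat] at he
  have h2 : eval v p * 2 = ∑ k, v k * eval v (pderiv k p) := by
    have e2 : (eval v) (2 : MvPolynomial (Fin 6) ℂ) = 2 := map_ofNat (eval v) 2
    rw [e2] at he
    linear_combination -he
  rw [h2]
  refine Finset.sum_congr rfl fun k _ => ?_
  rw [eval_homog_one (homog_pderiv hp k) v]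

/-- Six times the associated symmetric trilinear form of a cubic. -/
noncomputable def trip (F : MvPolynomial (Fin 6) ℂ) (x y z : Fin 6 → ℂ) : ℂ :=
  ∑ i, ∑ j, ∑ k, x i * y j * z k * eval 0 (pderiv i (pderiv j (pderiv k F)))

lemma trip_add_left (F : MvPolynomial (Fin 6) ℂ) (x x' y z : Fin 6 → ℂ) :
    trip F (x + x') y z = trip F x y z + trip F x' y z := by
  simp only [trip, ← Finset.sum_add_distrib]
  exact Finset.sum_congr rfl fun i _ => Finset.sum_congr rfl fun j _ =>
    Finset.sum_congr rfl fun k _ => by simp [add_mul]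

lemma trip_add_mid (F : MvPolynomial (Fin 6) ℂ) (x y y' z : Fin 6 → ℂ) :
    trip F x (y + y') z = trip F x y z + trip F x y' z := by
  simp only [trip, ← Finset.sum_add_distrib]
  exact Finset.sum_congr rfl fun i _ => Finset.sum_congr rfl fun j _ =>
    Finset.sum_congr rfl fun k _ => by simp [add_mul, mul_add]

lemma trip_add_right (F : MvPolynomial (Fin 6) ℂ) (x y z z' : Fin 6 → ℂ) :
    trip F x y (z + z') = trip F x y z + trip F x y z' := by
  simp only [trip, ← Finset.sum_add_distrib]
  exact Finset.sum_congr rfl fun i _ => Finset.sum_congr rfl fun j _ =>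
    Finset.sum_congr rfl fun k _ => by simp [add_mul, mul_add]

lemma trip_smul_left (F : MvPolynomial (Fin 6) ℂ) (a : ℂ) (x y z : Fin 6 → ℂ) :
    trip F (a • x) y z = a * trip F x y z := by
  simp only [trip, Finset.mul_sum]
  exact Finset.sum_congr rfl fun i _ => Finset.sum_congr rfl fun j _ =>
    Finset.sum_congr rfl fun k _ => by simp; ring

lemma trip_smul_mid (F : MvPolynomial (Fin 6) ℂ) (a : ℂ) (x y z : Fin 6 → ℂ) :
    trip F x (a • y) z = a * trip F x y z := by
  simp only [trip, Finset.mul_sum]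
  exact Finset.sum_congr rfl fun i _ => Finset.sum_congr rfl fun j _ =>
    Finset.sum_congr rfl fun k _ => by simp; ring

lemma trip_smul_right (F : MvPolynomial (Fin 6) ℂ) (a : ℂ) (x y z : Fin 6 → ℂ) :
    trip F x y (a • z) = a * trip F x y z := by
  simp only [trip, Finset.mul_sum]
  exact Finset.sum_congr rfl fun i _ => Finset.sum_congr rfl fun j _ =>
    Finset.sum_congr rfl fun k _ => by simp; ring

lemma trip_zero_left (F : MvPolynomial (Fin 6) ℂ) (y z : Fin 6 → ℂ) :
    trip F 0 y z = 0 := by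
  simp [trip]

lemma trip_swap12 (F : MvPolynomial (Fin 6) ℂ) (x y z : Fin 6 → ℂ) :
    trip F x y z = trip F y x z := by
  rw [trip, trip, Finset.sum_comm]
  refine Finset.sum_congr rfl fun j _ => Finset.sum_congr rfl fun i _ =>
    Finset.sum_congr rfl fun k _ => ?_
  rw [pderiv_pderiv_comm]
  ring

lemma trip_swap23 (F : MvPolynomial (Fin 6) ℂ) (x y z : Fin 6 → ℂ) :
    trip F x y z = trip F x z y := by
  rw [trip, trip]
  refine Finset.sum_congr rfl fun i _ => ?_
  rw [Finset.sum_comm]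
  refine Finset.sum_congr rfl fun k _ => Finset.sum_congr rfl fun j _ => ?_
  rw [pderiv_pderiv_comm j k F]
  ring

lemma diffAt_apply (F : MvPolynomial (Fin 6) ℂ) (x y : Fin 6 → ℂ) :
    diffAt F x y = ∑ i, eval x (pderiv i F) * y i := by
  simp [diffAt]

lemma diffAt_trip {F : MvPolynomial (Fin 6) ℂ} (hF3 : F.IsHomogeneous 3)
    (x y : Fin 6 → ℂ) : diffAt F x y * 2 = trip F x x y := by
  have h2 : ∀ i : Fin 6, eval x (pderiv i F) * 2
      = ∑ k, x k * ∑ j, x j * eval 0 (pderiv j (pderiv k (pderiv i F))) :=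
    fun i => eval_homog_two (homog_pderiv hF3 i) x
  rw [diffAt_apply, Finset.sum_mul]
  have : ∀ i : Fin 6, eval x (pderiv i F) * y i * 2
      = (∑ k, ∑ j, x k * (x j * (y i * eval 0 (pderiv j (pderiv k (pderiv i F)))))) := by
    intro i
    rw [show eval x (pderiv i F) * y i * 2 = (eval x (pderiv i F) * 2) * y i by ring, h2 i,
      Finset.sum_mul]
    refine Finset.sum_congr rfl fun k _ => ?_
    rw [Finset.mul_sum, Finset.sum_mul]
    exact Finset.sum_congr rfl fun j _ => by ring
  rw [Finset.sum_congr rfl fun i _ => this i]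
  -- now: ∑ i ∑ k ∑ j  x k * (x j * (y i * c j k i)) = trip F x x y = ∑ i ∑ j ∑ k x i x j y k c i j k
  rw [trip]
  rw [Finset.sum_comm]
  refine Finset.sum_congr rfl fun k _ => ?_
  rw [Finset.sum_comm]
  refine Finset.sum_congr rfl fun j _ => Finset.sum_congr rfl fun i _ => ?_
  rw [pderiv_pderiv_comm]
  ring

lemma trip_eval {F : MvPolynomial (Fin 6) ℂ} (hF3 : F.IsHomogeneous 3)
    (v : Fin 6 → ℂ) : trip F v v v = 6 * eval v F := by
  have he := congrArg (eval v) (euler6 hF3)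
  simp only [map_sum, map_mul, eval_X, smul_eval, nsmul_eq_mul] at he
  have e3 : (eval v) (3 : MvPolynomial (Fin 6) ℂ) = 3 := map_ofNat (eval v) 3
  have hd : diffAt F v v = 3 * eval v F := by
    rw [diffAt_apply]
    rw [show (∑ i, eval v (pderiv i F) * v i) = ∑ i, v i * eval v (pderiv i F) from
      Finset.sum_congr rfl fun i _ => mul_comm _ _]
    rw [he]
    norm_num
  rw [← diffAt_trip hF3, hd]
  ring

lemma trip_cube (F : MvPolynomial (Fin 6) ℂ) (a b : Fin 6 → ℂ) (t : ℂ) :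
    trip F (a + t • b) (a + t • b) (a + t • b) =
      trip F a a a + t * (trip F a a b + trip F a b a + trip F b a a)
        + t ^ 2 * (trip F a b b + trip F b a b + trip F b b a) + t ^ 3 * trip F b b b := by
  simp only [trip_add_left, trip_add_mid, trip_add_right, trip_smul_left, trip_smul_mid,
    trip_smul_right]
  ring

/-- For a line `L = ℙ(Λ)` of the second type contained in a plane `P = ℙ(W)` of a smooth
cubic fourfold, the 4-dimensional space `U = ⋂_{x ∈ Λ∖{0}} ker dF_x` contains `W` and
cuts the cubic in the union of the plane and a residual quadric containing the line. -/
theorem second_type_line_residual_quadric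
    (F : MvPolynomial (Fin 6) ℂ) (hF3 : F.IsHomogeneous 3)
    (hsmooth : ∀ x : Fin 6 → ℂ, x ≠ 0 → ∃ i, eval x (pderiv i F) ≠ 0)
    (W : Submodule ℂ (Fin 6 → ℂ)) (hW : Module.finrank ℂ W = 3)
    (hFW : ∀ x ∈ W, eval x F = 0)
    (Λ : Submodule ℂ (Fin 6 → ℂ)) (hΛW : Λ ≤ W) (hΛ : Module.finrank ℂ Λ = 2)
    (U : Submodule ℂ (Fin 6 → ℂ))
    (hUdef : U = ⨅ x ∈ (Λ : Set (Fin 6 → ℂ)) \ {0}, LinearMap.ker (diffAt F x))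
    (hU4 : Module.finrank ℂ U = 4) :
    W ≤ U ∧
    ∃ (l : (Fin 6 → ℂ) →ₗ[ℂ] ℂ) (q : QuadraticForm ℂ (Fin 6 → ℂ)),
      (∃ x ∈ U, l x ≠ 0) ∧
      (∀ x ∈ U, (l x = 0 ↔ x ∈ W)) ∧
      (∀ x ∈ U, eval x F = l x * q x) ∧
      (∀ x ∈ Λ, q x = 0) := by
  classical
  have hWtrip : ∀ w ∈ W, trip F w w w = 0 := fun w hw => by
    rw [trip_eval hF3, hFW w hw, mul_zero]
  have hWpair : ∀ x ∈ W, ∀ w ∈ W, trip F x x w = 0 := by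
    intro x hx w hw
    have e1 := trip_cube F x w 1
    have e2 := trip_cube F x w (-1)
    rw [trip_eval hF3, hFW _ (W.add_mem hx (W.smul_mem _ hw)), mul_zero] at e1 e2
    have s1 : trip F x w x = trip F x x w := trip_swap23 F x w x
    have s2 : trip F w x x = trip F x x w := (trip_swap12 F w x x).trans s1
    have hD := hWtrip w hw
    linear_combination (-1/6 : ℂ) * e1 + (1/6 : ℂ) * e2 - s1/3 - s2/3 - hD/3
  have hWU : W ≤ U := by
    intro w hw
    rw [hUdef]
    simp only [Submodule.mem_iInf, LinearMap.mem_ker]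
    intro x hx
    have h2 := diffAt_trip hF3 x w
    rw [hWpair x (hΛW hx.1) w hw] at h2
    linear_combination h2/2
  have hWne : W ≠ U := by
    intro e
    rw [e, hU4] at hW
    omega
  obtain ⟨h, hhU, hhW⟩ := SetLike.exists_of_lt (lt_of_le_of_ne hWU hWne)
  have hker : ∀ x, x ∈ Λ → x ≠ 0 → diffAt F x h = 0 := by
    have := hhU
    rw [hUdef] at this
    simp only [Submodule.mem_iInf, LinearMap.mem_ker] at this
    intro x hx hx0
    exact this x ⟨hx, hx0⟩
  -- linear form vanishing on W, nonzero at h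
  have hq0 : W.mkQ h ≠ 0 := by
    simp only [Submodule.mkQ_apply, ne_eq, Submodule.Quotient.mk_eq_zero]
    exact hhW
  obtain ⟨φ, hφ⟩ : ∃ φ : Module.Dual ℂ ((Fin 6 → ℂ) ⧸ W), φ (W.mkQ h) ≠ 0 := by
    by_contra hc
    push_neg at hc
    exact hq0 ((Module.forall_dual_apply_eq_zero_iff ℂ _).mp hc)
  set l : (Fin 6 → ℂ) →ₗ[ℂ] ℂ := (φ (W.mkQ h))⁻¹ • (φ ∘ₗ W.mkQ) with hl
  have hlW : ∀ w ∈ W, l w = 0 := by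
    intro w hw
    simp [hl, Submodule.mkQ_apply, (Submodule.Quotient.mk_eq_zero W).mpr hw]
  have hlh : l h = 1 := by
    simp only [hl, LinearMap.smul_apply, LinearMap.comp_apply, smul_eq_mul]
    exact inv_mul_cancel₀ hφ
  have hsup : W ⊔ (ℂ ∙ h) = U := by
    apply Submodule.eq_of_le_of_finrank_le
    · exact sup_le hWU ((Submodule.span_singleton_le_iff_mem h U).mpr hhU)
    · rw [hU4]
      have hlt : W < W ⊔ (ℂ ∙ h) := lt_of_le_of_ne le_sup_left
        (fun e => hhW (e ▸ Submodule.mem_sup_right (Submodule.mem_span_singleton_self h)))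
      have := Submodule.finrank_lt_finrank_of_lt hlt
      omega
  have hdec : ∀ v ∈ U, l v • h = l v • h ∧ v - l v • h ∈ W := by
    intro v hv
    rw [← hsup] at hv
    obtain ⟨w, hw, s, hs, rfl⟩ := Submodule.mem_sup.mp hv
    obtain ⟨c, rfl⟩ := Submodule.mem_span_singleton.mp hs
    have hlv : l (w + c • h) = c := by
      rw [map_add, hlW w hw, map_smul, hlh, smul_eq_mul, mul_one, zero_add]
    refine ⟨rfl, ?_⟩
    rw [hlv]
    simpa using hw
  -- the quadratic form
  set πm : (Fin 6 → ℂ) →ₗ[ℂ] (Fin 6 → ℂ) :=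
    LinearMap.id - (LinearMap.toSpanSingleton ℂ _ h) ∘ₗ l with hπm
  have hπ : ∀ v, πm v = v - l v • h := fun v => by
    simp [hπm, LinearMap.toSpanSingleton_apply]
  set B : (Fin 6 → ℂ) →ₗ[ℂ] (Fin 6 → ℂ) →ₗ[ℂ] ℂ := LinearMap.mk₂ ℂ
    (fun v u => (3 * trip F (πm v) (πm u) h + 3 * l v * trip F (πm u) h h
      + l v * l u * trip F h h h) / 6)
    (fun m₁ m₂ n => by simp only [map_add, trip_add_left]; ring)
    (fun c m n => by simp only [map_smul, trip_smul_left, smul_eq_mul]; ring)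
    (fun m n₁ n₂ => by simp only [map_add, trip_add_mid, trip_add_left]; ring)
    (fun c m n => by simp only [map_smul, trip_smul_mid, trip_smul_left, smul_eq_mul]; ring)
    with hB
  set q : QuadraticForm ℂ (Fin 6 → ℂ) := LinearMap.BilinMap.toQuadraticMap B with hq
  have hqv : ∀ v, q v = (3 * trip F (πm v) (πm v) h + 3 * l v * trip F (πm v) h h
      + l v * l v * trip F h h h) / 6 := by
    intro v
    rw [hq, LinearMap.BilinMap.toQuadraticMap_apply, hB, LinearMap.mk₂_apply]
  refine ⟨hWU, l, q, ⟨h, hhU, by rw [hlh]; exact one_ne_zero⟩, ?_, ?_, ?_⟩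
  · intro x hx
    obtain ⟨-, hxw⟩ := hdec x hx
    constructor
    · intro h0
      rw [h0] at hxw
      simpa using hxw
    · exact hlW x
  · intro v hv
    obtain ⟨-, hw⟩ := hdec v hv
    set c : ℂ := l v with hc
    set w : Fin 6 → ℂ := v - c • h with hwdef
    have h314 : v = w + c • h := by rw [hwdef]; abel
    have hπv : πm v = w := by rw [hπ v, ← hc, ← hwdef]
    have hE : trip F v v v = 6 * eval v F := trip_eval hF3 v
    have hexp := trip_cube F w h c
    rw [← h314] at hexp
    have s1 : trip F w h w = trip F w w h := trip_swap23 F w h w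
    have s2 : trip F h w w = trip F w w h := (trip_swap12 F h w w).trans s1
    have s3 : trip F h w h = trip F w h h := trip_swap12 F h w h
    have s4 : trip F h h w = trip F w h h := (trip_swap23 F h h w).trans s3
    have hW0 : trip F w w w = 0 := hWtrip w hw
    rw [hqv v, hπv, ← hc]
    linear_combination (-1/6 : ℂ) * hE + (1/6 : ℂ) * hexp + hW0/6
      + (c/6) * s1 + (c/6) * s2 + (c^2/6) * s3 + (c^2/6) * s4
  · intro x hx
    have hlx : l x = 0 := hlW x (hΛW hx)
    have hπx : πm x = x := by rw [hπ, hlx]; simp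
    have hxxh : trip F x x h = 0 := by
      rcases eq_or_ne x 0 with rfl | hne
      · exact trip_zero_left F _ _
      · have hd := hker x hx hne
        have h2 := diffAt_trip hF3 x h
        rw [hd] at h2
        linear_combination -h2
    rw [hqv x, hπx, hlx, hxxh]
    ring
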